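/- arXiv:2201.13281 — 2 statements merged into one kernel-verified Lean document; each statement's English description precedes it below -/
import Mathlib

section
/- Let d ≥ 1, s ∈ (0,1), O ⊂ ℝ^d open, and f, g ∈ L²(ℝ^d) with f ≤ g almost everywhere on O. Let u, v ∈ H^s(ℝ^d) be weak solutions of (−Δ)^s u + u = f in O and (−Δ)^s v + v = g in O respectively, i.e. ⟨u,h⟩_{H^s} = ∫_{ℝ^d}(f−u)h and ⟨v,h⟩_{H^s} = ∫_{ℝ^d}(g−v)h for all h ∈ H^s_0(Ō). If u ≤ v almost everywhere on ℝ^d ∖ O, then u ≤ v almost everywhere on O. -/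
/-!
Test both weak formulations with `h = 1_O (u - v)⁺`. It lies in `H^s_0(Ō)` because `u ≤ v`
off `O` and `t ↦ t⁺` is 1-Lipschitz, and it agrees a.e. with `w⁺`, `w = u - v`. Subtracting
the two equations gives `⟨w, w⁺⟩_{H^s} + ∫ h² = ∫ (f - g) h ≤ 0`; since `t ↦ t⁺` is monotone,
the integrand of `⟨w, w⁺⟩_{H^s}` is pointwise nonnegative. Hence `∫ h² ≤ 0`, i.e. `u ≤ v`
a.e. in `O`.
-/

open MeasureTheory Filter Topology Metric Set
open scoped ENNReal NNReal RealInnerProductSpace Pointwise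

noncomputable section

/-- Euclidean space `ℝ^d`. -/
abbrev Euc (d : ℕ) := EuclideanSpace ℝ (Fin d)

/-- The fractional `H^s` inner product
`⟨u,v⟩_{H^s} = ∫∫ (u x − u y)(v x − v y)/|x−y|^{d+2s} dx dy`. -/
def fracInner (d : ℕ) (s : ℝ) (u v : Euc d → ℝ) : ℝ :=
  ∫ p : Euc d × Euc d, (u p.1 - u p.2) * (v p.1 - v p.2) / dist p.1 p.2 ^ ((d : ℝ) + 2 * s)

/-- The squared Gagliardo seminorm `|u|²_{H^s}` as an extended nonnegative real. -/
def fracSq (d : ℕ) (s : ℝ) (u : Euc d → ℝ) : ℝ≥0∞ :=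
  ∫⁻ p : Euc d × Euc d, ENNReal.ofReal ((u p.1 - u p.2) ^ 2 / dist p.1 p.2 ^ ((d : ℝ) + 2 * s))

/-- `H^s_0(Ω̄)`: functions on `ℝ^d` vanishing outside `Ω` with finite Gagliardo seminorm. -/
def Hs0 (d : ℕ) (s : ℝ) (Ω : Set (Euc d)) : Set (Euc d → ℝ) :=
  {u | (∀ x, x ∉ Ω → u x = 0) ∧ fracSq d s u < ⊤}

lemma ae_fst_and_snd {α : Type*} [MeasurableSpace α] {μ : Measure α} [SFinite μ] {P : α → Prop}
    (h : ∀ᵐ x ∂μ, P x) : ∀ᵐ p ∂μ.prod μ, P p.1 ∧ P p.2 :=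
  (Measure.quasiMeasurePreserving_fst.ae h).and (Measure.quasiMeasurePreserving_snd.ae h)

lemma mul_max_zero_self (a : ℝ) : a * max a 0 = max a 0 ^ 2 := by
  rcases le_total a 0 with ha | ha <;> simp [ha, sq]

lemma mul_indicator_max_zero_self {α : Type*} (O : Set α) (w : α → ℝ) (x : α) :
    w x * O.indicator (fun y => max (w y) 0) x = O.indicator (fun y => max (w y) 0) x ^ 2 := by
  by_cases hx : x ∈ O
  · simp only [indicator_of_mem hx, mul_max_zero_self]
  · simp [indicator_of_notMem hx]

lemma indicator_max_zero_ae_eq {α : Type*} [MeasurableSpace α] {μ : Measure α} {O : Set α}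
    {w : α → ℝ} (hout : ∀ᵐ x ∂μ, x ∉ O → w x ≤ 0) :
    O.indicator (fun x => max (w x) 0) =ᵐ[μ] fun x => max (w x) 0 := by
  filter_upwards [hout] with x hx
  by_cases hxO : x ∈ O
  · exact indicator_of_mem hxO _
  · rw [indicator_of_notMem hxO, max_eq_right (hx hxO)]

def fracIntegrand (d : ℕ) (s : ℝ) (u v : Euc d → ℝ) (p : Euc d × Euc d) : ℝ :=
  (u p.1 - u p.2) * (v p.1 - v p.2) / dist p.1 p.2 ^ ((d : ℝ) + 2 * s)

section

variable {d : ℕ} {s : ℝ}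

lemma fracInner_eq_integral_fracIntegrand (u v : Euc d → ℝ) :
    fracInner d s u v = ∫ p, fracIntegrand d s u v p := rfl

lemma fracSq_eq_lintegral_fracIntegrand (u : Euc d → ℝ) :
    fracSq d s u = ∫⁻ p, ENNReal.ofReal (fracIntegrand d s u u p) := by
  simp only [fracSq, fracIntegrand, sq]

lemma fracIntegrand_self_nonneg (u : Euc d → ℝ) (p : Euc d × Euc d) :
    0 ≤ fracIntegrand d s u u p :=
  div_nonneg (mul_self_nonneg _) (Real.rpow_nonneg dist_nonneg _)

lemma abs_fracIntegrand_le (u v : Euc d → ℝ) (p : Euc d × Euc d) :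
    |fracIntegrand d s u v p| ≤ (fracIntegrand d s u u p + fracIntegrand d s v v p) / 2 := by
  have hK : 0 ≤ dist p.1 p.2 ^ ((d : ℝ) + 2 * s) := Real.rpow_nonneg dist_nonneg _
  simp only [fracIntegrand, abs_div, abs_of_nonneg hK, abs_mul]
  rw [← add_div, div_right_comm]
  gcongr
  nlinarith [sq_nonneg (|u p.1 - u p.2| - |v p.1 - v p.2|), abs_mul_abs_self (u p.1 - u p.2),
    abs_mul_abs_self (v p.1 - v p.2)]

lemma fracIntegrand_sub_left (u v h : Euc d → ℝ) (p : Euc d × Euc d) :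
    fracIntegrand d s (u - v) h p = fracIntegrand d s u h p - fracIntegrand d s v h p := by
  simp only [fracIntegrand, Pi.sub_apply, ← sub_div]
  ring_nf

lemma fracIntegrand_sub_self_le (u v : Euc d → ℝ) (p : Euc d × Euc d) :
    fracIntegrand d s (u - v) (u - v) p ≤
      2 * (fracIntegrand d s u u p + fracIntegrand d s v v p) := by
  have hK : 0 ≤ dist p.1 p.2 ^ ((d : ℝ) + 2 * s) := Real.rpow_nonneg dist_nonneg _
  simp only [fracIntegrand, Pi.sub_apply, ← add_div, mul_div_assoc']
  refine div_le_div_of_nonneg_right ?_ hK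
  nlinarith [sq_nonneg (u p.1 - u p.2 + (v p.1 - v p.2))]

lemma fracIntegrand_max_zero_nonneg (w : Euc d → ℝ) (p : Euc d × Euc d) :
    0 ≤ fracIntegrand d s w (fun x => max (w x) 0) p := by
  refine div_nonneg ?_ (Real.rpow_nonneg dist_nonneg _)
  rcases le_total (w p.1) (w p.2) with hle | hle
  · exact mul_nonneg_of_nonpos_of_nonpos (sub_nonpos.2 hle) (sub_nonpos.2 (max_le_max hle le_rfl))
  · exact mul_nonneg (sub_nonneg.2 hle) (sub_nonneg.2 (max_le_max hle le_rfl))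

lemma fracIntegrand_ae_eq {u u' v v' : Euc d → ℝ} (hu : u =ᵐ[volume] u')
    (hv : v =ᵐ[volume] v') :
    fracIntegrand d s u v =ᵐ[volume] fracIntegrand d s u' v' := by
  filter_upwards [ae_fst_and_snd hu, ae_fst_and_snd hv] with p hup hvp
  simp only [fracIntegrand, hup.1, hup.2, hvp.1, hvp.2]

lemma fracSq_congr_ae {u u' : Euc d → ℝ} (hu : u =ᵐ[volume] u') :
    fracSq d s u = fracSq d s u' := by
  simp only [fracSq_eq_lintegral_fracIntegrand]
  exact lintegral_congr_ae ((fracIntegrand_ae_eq hu hu).mono fun _ hp => congrArg ENNReal.ofReal hp)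

lemma fracInner_congr_ae_right (u : Euc d → ℝ) {v v' : Euc d → ℝ} (hv : v =ᵐ[volume] v') :
    fracInner d s u v = fracInner d s u v' :=
  integral_congr_ae (fracIntegrand_ae_eq (EventuallyEq.refl _ u) hv)

lemma aestronglyMeasurable_fracIntegrand {u v : Euc d → ℝ} (hu : AEStronglyMeasurable u volume)
    (hv : AEStronglyMeasurable v volume) :
    AEStronglyMeasurable (fracIntegrand d s u v) volume :=
  (((hu.comp_fst.sub hu.comp_snd).mul (hv.comp_fst.sub hv.comp_snd)).aemeasurable.div
    ((measurable_fst.dist measurable_snd).pow_const _).aemeasurable).aestronglyMeasurable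

lemma integrable_fracIntegrand_self_iff {u : Euc d → ℝ} (hu : AEStronglyMeasurable u volume) :
    Integrable (fracIntegrand d s u u) volume ↔ fracSq d s u < ⊤ := by
  rw [fracSq_eq_lintegral_fracIntegrand, Integrable,
    and_iff_right (aestronglyMeasurable_fracIntegrand hu hu),
    hasFiniteIntegral_iff_ofReal (ae_of_all _ (fracIntegrand_self_nonneg u))]

lemma integrable_fracIntegrand {u v : Euc d → ℝ} (hu : AEStronglyMeasurable u volume)
    (hv : AEStronglyMeasurable v volume) (huHs : fracSq d s u < ⊤) (hvHs : fracSq d s v < ⊤) :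
    Integrable (fracIntegrand d s u v) volume :=
  (((integrable_fracIntegrand_self_iff hu).2 huHs).add
    ((integrable_fracIntegrand_self_iff hv).2 hvHs)).div_const 2 |>.mono'
    (aestronglyMeasurable_fracIntegrand hu hv) (ae_of_all _ (abs_fracIntegrand_le u v))

lemma fracSq_sub_lt_top {u v : Euc d → ℝ} (hu : AEStronglyMeasurable u volume)
    (hv : AEStronglyMeasurable v volume) (huHs : fracSq d s u < ⊤) (hvHs : fracSq d s v < ⊤) :
    fracSq d s (u - v) < ⊤ := by
  refine (integrable_fracIntegrand_self_iff (hu.sub hv)).1 ?_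
  refine ((((integrable_fracIntegrand_self_iff hu).2 huHs).add
    ((integrable_fracIntegrand_self_iff hv).2 hvHs)).const_mul 2).mono'
    (aestronglyMeasurable_fracIntegrand (hu.sub hv) (hu.sub hv)) (ae_of_all _ fun p => ?_)
  rw [Real.norm_of_nonneg (fracIntegrand_self_nonneg _ p)]
  exact fracIntegrand_sub_self_le u v p

lemma fracSq_max_zero_le (w : Euc d → ℝ) :
    fracSq d s (fun x => max (w x) 0) ≤ fracSq d s w := by
  refine lintegral_mono fun p => ENNReal.ofReal_le_ofReal ?_
  refine div_le_div_of_nonneg_right ?_ (Real.rpow_nonneg dist_nonneg _)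
  exact sq_le_sq.2 (abs_max_sub_max_le_abs _ _ _)

lemma fracInner_sub_left {u v h : Euc d → ℝ} (hu : AEStronglyMeasurable u volume)
    (hv : AEStronglyMeasurable v volume) (hh : AEStronglyMeasurable h volume)
    (huHs : fracSq d s u < ⊤) (hvHs : fracSq d s v < ⊤) (hhHs : fracSq d s h < ⊤) :
    fracInner d s (u - v) h = fracInner d s u h - fracInner d s v h := by
  simp only [fracInner_eq_integral_fracIntegrand, fracIntegrand_sub_left]
  exact integral_sub (integrable_fracIntegrand hu hh huHs hhHs)
    (integrable_fracIntegrand hv hh hvHs hhHs)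

lemma fracInner_max_zero_nonneg (w : Euc d → ℝ) :
    0 ≤ fracInner d s w (fun x => max (w x) 0) :=
  integral_nonneg (fracIntegrand_max_zero_nonneg w)

/-- Test functions are taken in `H^s_0(Ō) ∩ L²`, so that the right-hand side is a genuine
integral rather than a junk value. -/
def IsWeakSolution (d : ℕ) (s : ℝ) (O : Set (Euc d)) (f u : Euc d → ℝ) : Prop :=
  ∀ h ∈ Hs0 d s O, MemLp h 2 volume → fracInner d s u h = ∫ x, (f x - u x) * h x

lemma IsWeakSolution.sub {O : Set (Euc d)} {f g u v : Euc d → ℝ}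
    (hf : MemLp f 2 volume) (hg : MemLp g 2 volume) (huL2 : MemLp u 2 volume)
    (hvL2 : MemLp v 2 volume) (huHs : fracSq d s u < ⊤) (hvHs : fracSq d s v < ⊤)
    (hu : IsWeakSolution d s O f u) (hv : IsWeakSolution d s O g v) :
    IsWeakSolution d s O (f - g) (u - v) := by
  intro h hmem hh
  rw [fracInner_sub_left huL2.1 hvL2.1 hh.1 huHs hvHs hmem.2, hu h hmem hh, hv h hmem hh]
  refine (integral_sub ((hf.sub huL2).integrable_mul hh)
    ((hg.sub hvL2).integrable_mul hh)).symm.trans (integral_congr_ae (ae_of_all _ fun x => ?_))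
  simp only [Pi.mul_apply, Pi.sub_apply]
  ring

/-- Weak maximum principle for `(−Δ)^s + Id`. -/
theorem IsWeakSolution.ae_nonpos {O : Set (Euc d)} {F w : Euc d → ℝ} (hF : MemLp F 2 volume)
    (hFO : ∀ᵐ x, x ∈ O → F x ≤ 0) (hw : MemLp w 2 volume) (hwHs : fracSq d s w < ⊤)
    (hweak : IsWeakSolution d s O F w) (hout : ∀ᵐ x, x ∉ O → w x ≤ 0) :
    ∀ᵐ x, x ∈ O → w x ≤ 0 := by
  set h := O.indicator fun x => max (w x) 0
  have h_ae : h =ᵐ[volume] fun x => max (w x) 0 := indicator_max_zero_ae_eq hout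
  have hhL2 : MemLp h 2 volume := hw.pos_part.ae_eq h_ae.symm
  have hmem : h ∈ Hs0 d s O := ⟨fun x hx => indicator_of_notMem hx _,
    (fracSq_congr_ae h_ae).trans_lt ((fracSq_max_zero_le w).trans_lt hwHs)⟩
  have henergy : ∫ x, h x ^ 2 ≤ 0 := by
    have hsplit : fracInner d s w h = (∫ x, F x * h x) - ∫ x, h x ^ 2 := by
      rw [hweak h hmem hhL2]
      refine (integral_congr_ae (ae_of_all _ fun x => ?_)).trans
        (integral_sub (hF.integrable_mul hhL2) hhL2.integrable_sq)
      rw [sub_mul]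
      exact congrArg _ (mul_indicator_max_zero_self O w x)
    have hpos : 0 ≤ fracInner d s w h :=
      (fracInner_congr_ae_right w h_ae).symm ▸ fracInner_max_zero_nonneg w
    have hsource : ∫ x, F x * h x ≤ 0 := by
      refine integral_nonpos_of_ae ?_
      filter_upwards [hFO] with x hx
      by_cases hxO : x ∈ O
      · exact mul_nonpos_of_nonpos_of_nonneg (hx hxO)
          (indicator_nonneg (fun _ _ => le_max_right _ _) x)
      · simp [h, indicator_of_notMem hxO]
    linarith
  have hsq : (fun x => h x ^ 2) =ᵐ[volume] 0 :=
    (integral_eq_zero_iff_of_nonneg (fun x => sq_nonneg _) hhL2.integrable_sq).1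
      (le_antisymm henergy (integral_nonneg fun x => sq_nonneg _))
  filter_upwards [hsq] with x hx hxO
  simpa [h, indicator_of_mem hxO] using hx

end

theorem fractional_comparison_principle_general
    (d : ℕ) (s : ℝ)
    (O : Set (Euc d))
    (f g : Euc d → ℝ) (hf : MemLp f 2 volume) (hg : MemLp g 2 volume)
    (hfg : ∀ᵐ x ∂(volume : Measure (Euc d)), x ∈ O → f x ≤ g x)
    (u v : Euc d → ℝ)
    (huL2 : MemLp u 2 volume) (huHs : fracSq d s u < ⊤)
    (hvL2 : MemLp v 2 volume) (hvHs : fracSq d s v < ⊤)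
    (hu : ∀ h ∈ Hs0 d s O, fracInner d s u h = ∫ x, (f x - u x) * h x)
    (hv : ∀ h ∈ Hs0 d s O, fracInner d s v h = ∫ x, (g x - v x) * h x)
    (hout : ∀ᵐ x ∂(volume : Measure (Euc d)), x ∉ O → u x ≤ v x) :
    ∀ᵐ x ∂(volume : Measure (Euc d)), x ∈ O → u x ≤ v x := by
  have hweak : IsWeakSolution d s O (f - g) (u - v) :=
    IsWeakSolution.sub hf hg huL2 hvL2 huHs hvHs (fun h hmem _ => hu h hmem)
      (fun h hmem _ => hv h hmem)
  have hcmp := hweak.ae_nonpos (hf.sub hg)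
    (hfg.mono fun x hx hxO => sub_nonpos.2 (hx hxO)) (huL2.sub hvL2)
    (fracSq_sub_lt_top huL2.1 hvL2.1 huHs hvHs) (hout.mono fun x hx hxO => sub_nonpos.2 (hx hxO))
  filter_upwards [hcmp] with x hx hxO
  exact sub_nonpos.1 (hx hxO)

/-- comparison principle for `(−Δ)^s + Id`. -/
theorem fractional_comparison_principle
    (d : ℕ) (hd : 1 ≤ d) (s : ℝ) (hs : s ∈ Set.Ioo (0 : ℝ) 1)
    (O : Set (Euc d)) (hO : IsOpen O)
    (f g : Euc d → ℝ) (hf : MemLp f 2 volume) (hg : MemLp g 2 volume)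
    (hfg : ∀ᵐ x ∂(volume : Measure (Euc d)), x ∈ O → f x ≤ g x)
    (u v : Euc d → ℝ)
    (huL2 : MemLp u 2 volume) (huHs : fracSq d s u < ⊤)
    (hvL2 : MemLp v 2 volume) (hvHs : fracSq d s v < ⊤)
    (hu : ∀ h ∈ Hs0 d s O, fracInner d s u h = ∫ x, (f x - u x) * h x)
    (hv : ∀ h ∈ Hs0 d s O, fracInner d s v h = ∫ x, (g x - v x) * h x)
    (hout : ∀ᵐ x ∂(volume : Measure (Euc d)), x ∉ O → u x ≤ v x) :
    ∀ᵐ x ∂(volume : Measure (Euc d)), x ∈ O → u x ≤ v x :=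
  fractional_comparison_principle_general d s O f g hf hg hfg u v huL2 huHs hvL2 hvHs hu hv hout
end
end

section
/- Let d ≥ 1, s ∈ (0,1), Ω ⊂ ℝ^d open and bounded, α > 0, and f ∈ L^∞(Ω) with essinf_Ω f ≤ 0 ≤ esssup_Ω f. Then the unique minimizer u of u ↦ ∫_Ω (u − f)² + α |u|²_{H^s} over H^s_0(Ω̄) ∩ L²(Ω) satisfies essinf_Ω f ≤ u(x) ≤ esssup_Ω f for almost every x ∈ Ω. -/
open MeasureTheory Filter Topology Metric Set
open scoped ENNReal NNReal RealInnerProductSpace Pointwise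

noncomputable section

/-- `H^s_0(Ω̄) ∩ L²(Ω)` (functions vanishing outside `Ω`). -/
def admSet2 (d : ℕ) (s : ℝ) (Ω : Set (Euc d)) : Set (Euc d → ℝ) :=
  {w | w ∈ Hs0 d s Ω ∧ MemLp w 2 volume}

/-!
Truncating at the essential bounds `m ≤ 0 ≤ M` of `f` is a `1`-Lipschitz map `φ` of `ℝ` fixing
`0` and almost every value of `f`. Hence `φ ∘ u` is again admissible, its Gagliardo seminorm is at most
that of `u`, and pointwise `|φ (u x) - f x| = |φ (u x) - φ (f x)| ≤ |u x - f x|`. So `φ ∘ u` is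
also a minimizer, and by uniqueness `u = φ ∘ u` takes its values in `[m, M]` almost everywhere.
-/

theorem MeasureTheory.MemLp.ae_mem_Icc_essInf_essSup {α : Type*} [MeasurableSpace α]
    {μ : Measure α} {f : α → ℝ} (hf : MemLp f ⊤ μ) :
    ∀ᵐ x ∂μ, f x ∈ Icc (essInf f μ) (essSup f μ) := by
  have hbdd : IsBoundedUnder (· ≤ ·) (ae μ) fun x => |f x| := by
    have h := hf.eLpNorm_lt_top
    rw [eLpNorm_exponent_top, eLpNormEssSup_lt_top_iff_isBoundedUnder] at h
    obtain ⟨C, hC⟩ := h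
    exact ⟨C, by simpa [← NNReal.coe_le_coe] using hC⟩
  obtain ⟨hle, hge⟩ := isBoundedUnder_le_abs.mp hbdd
  filter_upwards [ae_essInf_le hge, ae_le_essSup hle] with x h1 h2 using ⟨h1, h2⟩

theorem LipschitzWith.sq_sub_le {φ : ℝ → ℝ} (hφ : LipschitzWith 1 φ) (a b : ℝ) :
    (φ a - φ b) ^ 2 ≤ (a - b) ^ 2 :=
  sq_le_sq.2 (by simpa [Real.dist_eq] using hφ.dist_le_mul a b)

theorem integral_sq_comp_sub_le {α : Type*} [MeasurableSpace α] {μ : Measure α} {φ : ℝ → ℝ}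
    (hφ : LipschitzWith 1 φ) {u f : α → ℝ} (hf : ∀ᵐ x ∂μ, φ (f x) = f x)
    (hi : Integrable (fun x => (u x - f x) ^ 2) μ) :
    ∫ x, (φ (u x) - f x) ^ 2 ∂μ ≤ ∫ x, (u x - f x) ^ 2 ∂μ := by
  refine integral_mono_of_nonneg (ae_of_all _ fun _ => sq_nonneg _) hi ?_
  filter_upwards [hf] with x hx
  simpa only [hx] using hφ.sq_sub_le (u x) (f x)

section LipschitzComp

variable {d : ℕ} {s : ℝ} {Ω : Set (Euc d)} {φ : ℝ → ℝ} {u : Euc d → ℝ}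

theorem fracSq_comp_le (hφ : LipschitzWith 1 φ) (u : Euc d → ℝ) :
    fracSq d s (φ ∘ u) ≤ fracSq d s u :=
  lintegral_mono fun p => ENNReal.ofReal_le_ofReal <|
    div_le_div_of_nonneg_right (hφ.sq_sub_le _ _) (by positivity)

theorem comp_mem_Hs0 (hφ : LipschitzWith 1 φ) (hφ0 : φ 0 = 0) (hu : u ∈ Hs0 d s Ω) :
    φ ∘ u ∈ Hs0 d s Ω :=
  ⟨fun x hx => by simp [hu.1 x hx, hφ0], (fracSq_comp_le hφ u).trans_lt hu.2⟩

theorem comp_mem_admSet2 (hφ : LipschitzWith 1 φ) (hφ0 : φ 0 = 0) (hu : u ∈ admSet2 d s Ω) :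
    φ ∘ u ∈ admSet2 d s Ω :=
  ⟨comp_mem_Hs0 hφ hφ0 hu.1, hφ.comp_memLp hφ0 hu.2⟩

end LipschitzComp

theorem truncation_lemma_general
    (d : ℕ) (s : ℝ)
    (Ω : Set (Euc d)) (hΩb : Bornology.IsBounded Ω)
    (α : ℝ) (hα : 0 < α)
    (f : Euc d → ℝ) (hf : MemLp f ⊤ (volume.restrict Ω))
    (hinf : essInf f (volume.restrict Ω) ≤ 0) (hsup : 0 ≤ essSup f (volume.restrict Ω))
    (u : Euc d → ℝ) (hu : u ∈ admSet2 d s Ω)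
    (humin : IsMinOn (fun w => (∫ x in Ω, (w x - f x) ^ 2) + α * (fracSq d s w).toReal)
      (admSet2 d s Ω) u)
    (huniq : ∀ v ∈ admSet2 d s Ω,
      IsMinOn (fun w => (∫ x in Ω, (w x - f x) ^ 2) + α * (fracSq d s w).toReal)
        (admSet2 d s Ω) v → v =ᵐ[volume] u) :
    ∀ᵐ x ∂(volume.restrict Ω),
      essInf f (volume.restrict Ω) ≤ u x ∧ u x ≤ essSup f (volume.restrict Ω) := by
  set m := essInf f (volume.restrict Ω)
  set M := essSup f (volume.restrict Ω)
  set φ : ℝ → ℝ := fun t => max m (min M t)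
  have hφ : LipschitzWith 1 φ := (LipschitzWith.id.const_min M).const_max m
  have hφ_fix : ∀ t ∈ Icc m M, φ t = t := fun t ht => by
    simp only [φ, min_eq_right ht.2, max_eq_right ht.1]
  have : IsFiniteMeasure (volume.restrict Ω) := isFiniteMeasure_restrict.2 hΩb.measure_lt_top.ne
  have hfid : ∫ x in Ω, (φ (u x) - f x) ^ 2 ≤ ∫ x in Ω, (u x - f x) ^ 2 :=
    integral_sq_comp_sub_le hφ (hf.ae_mem_Icc_essInf_essSup.mono fun x hx => hφ_fix _ hx)
      ((hu.2.restrict Ω).sub (hf.mono_exponent le_top)).integrable_sq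
  have hreg : α * (fracSq d s (φ ∘ u)).toReal ≤ α * (fracSq d s u).toReal :=
    mul_le_mul_of_nonneg_left (ENNReal.toReal_mono hu.1.2.ne (fracSq_comp_le hφ u)) hα.le
  have hvu : φ ∘ u =ᵐ[volume] u :=
    huniq _ (comp_mem_admSet2 hφ (hφ_fix 0 ⟨hinf, hsup⟩) hu)
      fun w hw => (add_le_add hfid hreg).trans (humin hw)
  filter_upwards [ae_restrict_of_ae hvu] with x hx
  rw [← hx]
  exact ⟨le_max_left _ _, max_le (hinf.trans hsup) (min_le_left _ _)⟩

/-- truncation: the denoised function stays between the essential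
bounds of the data. -/
theorem truncation_lemma
    (d : ℕ) (hd : 1 ≤ d) (s : ℝ) (hs : s ∈ Set.Ioo (0 : ℝ) 1)
    (Ω : Set (Euc d)) (hΩo : IsOpen Ω) (hΩb : Bornology.IsBounded Ω)
    (α : ℝ) (hα : 0 < α)
    (f : Euc d → ℝ) (hf : MemLp f ⊤ (volume.restrict Ω))
    (hinf : essInf f (volume.restrict Ω) ≤ 0) (hsup : 0 ≤ essSup f (volume.restrict Ω))
    (u : Euc d → ℝ) (hu : u ∈ admSet2 d s Ω)
    (humin : IsMinOn (fun w => (∫ x in Ω, (w x - f x) ^ 2) + α * (fracSq d s w).toReal)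
      (admSet2 d s Ω) u)
    (huniq : ∀ v ∈ admSet2 d s Ω,
      IsMinOn (fun w => (∫ x in Ω, (w x - f x) ^ 2) + α * (fracSq d s w).toReal)
        (admSet2 d s Ω) v → v =ᵐ[volume] u) :
    ∀ᵐ x ∂(volume.restrict Ω),
      essInf f (volume.restrict Ω) ≤ u x ∧ u x ≤ essSup f (volume.restrict Ω) :=
  truncation_lemma_general d s Ω hΩb α hα f hf hinf hsup u hu humin huniq
end
end
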